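/- arXiv:1906.08253 — 2 statements merged into one kernel-verified Lean document; each statement's English description precedes it below -/
import Mathlib

section
/- Let S and A be finite nonempty sets, let π_1 and π_2 be two policies executed under the SAME dynamics kernel p from a common initial state distribution ρ0, let r be a reward bounded in absolute value by r_max ≥ 0, and γ ∈ (0,1). If max_s TV(π_1(·|s), π_2(·|s)) ≤ ε_π, then the respective discounted returns satisfy |η_1 − η_2| ≤ 2·r_max·γ·ε_π/(1−γ)² + 2·r_max·ε_π/(1−γ). -/
open scoped BigOperators

/-- Total variation distance between two probability mass functions on a finite type. -/
noncomputable def tv {X : Type*} [Fintype X] (q1 q2 : PMF X) : ℝ :=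
  (1 / 2) * ∑ x, |(q1 x).toReal - (q2 x).toReal|

/-- Total variation distance between two real-valued distributions on a finite type. -/
noncomputable def tvFun {X : Type*} [Fintype X] (d1 d2 : X → ℝ) : ℝ :=
  (1 / 2) * ∑ x, |d1 x - d2 x|

/-- Time-`t` state-action marginal of a (possibly time-varying) policy/dynamics pair,
started from initial state distribution `ρ0`:  `d⁰(s,a) = ρ0(s)·π₀(a|s)` and
`d^{t+1}(s,a) = Σ_{s',a'} d^t(s',a')·p_t(s|s',a')·π_{t+1}(a|s)`. -/
noncomputable def marginal {S A : Type*} [Fintype S] [Fintype A]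
    (ρ0 : PMF S) (πseq : ℕ → S → PMF A) (pseq : ℕ → S × A → PMF S) :
    ℕ → S × A → ℝ
  | 0 => fun sa => (ρ0 sa.1).toReal * ((πseq 0 sa.1) sa.2).toReal
  | t + 1 => fun sa =>
      ∑ s' : S, ∑ a' : A,
        marginal ρ0 πseq pseq t (s', a') * ((pseq t (s', a')) sa.1).toReal *
          ((πseq (t + 1) sa.1) sa.2).toReal

/-- Discounted return `η = Σ_t γ^t Σ_{s,a} d^t(s,a)·r(s,a)`. -/
noncomputable def ret {S A : Type*} [Fintype S] [Fintype A]
    (γ : ℝ) (r : S × A → ℝ) (d : ℕ → S × A → ℝ) : ℝ :=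
  ∑' t : ℕ, γ ^ t * ∑ sa : S × A, d t sa * r sa

/-!
Write the marginals as `d^{t+1} = withPolicy (transition p d^t) π`. A Markov kernel does not
increase total variation, and swapping `π₁` for `π₂` on a fixed state distribution costs at
most `ε_π`, so by the triangle inequality `TV(d₁^t, d₂^t) ≤ (t + 1) ε_π`. The `t`-th reward
terms then differ by at most `2 r_max γ^t (t + 1) ε_π`, and
`Σ_t (t + 1) γ^t = γ / (1 - γ)² + 1 / (1 - γ)`.
-/

open Finset

section

variable {X : Type*} [Fintype X]

theorem PMF.toReal_mem_stdSimplex (q : PMF X) : (fun x => (q x).toReal) ∈ stdSimplex ℝ X := by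
  refine ⟨fun x => ENNReal.toReal_nonneg, ?_⟩
  have hq : ∑ x, q x = 1 := by simpa using q.tsum_coe
  rw [← ENNReal.toReal_sum fun x _ => q.apply_ne_top x, hq, ENNReal.toReal_one]

theorem tvFun_triangle (d1 d2 d3 : X → ℝ) : tvFun d1 d3 ≤ tvFun d1 d2 + tvFun d2 d3 := by
  simp only [tvFun, ← mul_add, ← sum_add_distrib]
  gcongr with x
  exact abs_sub_le _ _ _

theorem abs_sum_mul_le_of_mem_stdSimplex {d : X → ℝ} (hd : d ∈ stdSimplex ℝ X) {r : X → ℝ}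
    {rmax : ℝ} (hr : ∀ x, |r x| ≤ rmax) : |∑ x, d x * r x| ≤ rmax :=
  calc |∑ x, d x * r x| ≤ ∑ x, d x * rmax := by
        refine (abs_sum_le_sum_abs _ _).trans (sum_le_sum fun x _ => ?_)
        rw [abs_mul, abs_of_nonneg (hd.1 x)]
        exact mul_le_mul_of_nonneg_left (hr x) (hd.1 x)
    _ = rmax := by rw [← sum_mul, hd.2, one_mul]

theorem abs_sum_mul_sub_sum_mul_le {r : X → ℝ} {rmax : ℝ} (hr : ∀ x, |r x| ≤ rmax)
    (d1 d2 : X → ℝ) :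
    |∑ x, d1 x * r x - ∑ x, d2 x * r x| ≤ 2 * rmax * tvFun d1 d2 :=
  calc |∑ x, d1 x * r x - ∑ x, d2 x * r x| = |∑ x, (d1 x - d2 x) * r x| := by
        simp only [sub_mul, sum_sub_distrib]
    _ ≤ ∑ x, |d1 x - d2 x| * rmax := by
        refine (abs_sum_le_sum_abs _ _).trans (sum_le_sum fun x _ => ?_)
        rw [abs_mul]
        exact mul_le_mul_of_nonneg_left (hr x) (abs_nonneg _)
    _ = 2 * rmax * tvFun d1 d2 := by rw [tvFun, ← sum_mul]; ring

end

theorem hasSum_succ_mul_geometric {γ : ℝ} (hγ0 : 0 ≤ γ) (hγ1 : γ < 1) :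
    HasSum (fun t : ℕ => ((t : ℝ) + 1) * γ ^ t) (γ / (1 - γ) ^ 2 + (1 - γ)⁻¹) := by
  have hγ : ‖γ‖ < 1 := by rwa [Real.norm_of_nonneg hγ0]
  simpa only [add_mul, one_mul] using
    (hasSum_coe_mul_geometric_of_norm_lt_one hγ).add (hasSum_geometric_of_lt_one hγ0 hγ1)

section

variable {S A : Type*} [Fintype S] [Fintype A]

noncomputable def withPolicy (q : S → ℝ) (π : S → PMF A) : S × A → ℝ :=
  fun sa => q sa.1 * (π sa.1 sa.2).toReal

noncomputable def transition (p : S × A → PMF S) (d : S × A → ℝ) : S → ℝ :=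
  fun s' => ∑ sa, d sa * (p sa s').toReal

theorem marginal_zero (ρ0 : PMF S) (πseq : ℕ → S → PMF A) (pseq : ℕ → S × A → PMF S) :
    marginal ρ0 πseq pseq 0 = withPolicy (fun s => (ρ0 s).toReal) (πseq 0) :=
  rfl

theorem marginal_succ (ρ0 : PMF S) (πseq : ℕ → S → PMF A) (pseq : ℕ → S × A → PMF S) (t : ℕ) :
    marginal ρ0 πseq pseq (t + 1) =
      withPolicy (transition (pseq t) (marginal ρ0 πseq pseq t)) (πseq (t + 1)) := by
  ext sa
  simp only [marginal, withPolicy, transition, Fintype.sum_prod_type, sum_mul]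

theorem withPolicy_mem_stdSimplex {q : S → ℝ} (hq : q ∈ stdSimplex ℝ S) (π : S → PMF A) :
    withPolicy q π ∈ stdSimplex ℝ (S × A) := by
  refine ⟨fun sa => mul_nonneg (hq.1 sa.1) ENNReal.toReal_nonneg, ?_⟩
  simp only [withPolicy, Fintype.sum_prod_type, ← mul_sum, (π _).toReal_mem_stdSimplex.2,
    mul_one, hq.2]

theorem transition_mem_stdSimplex (p : S × A → PMF S) {d : S × A → ℝ}
    (hd : d ∈ stdSimplex ℝ (S × A)) : transition p d ∈ stdSimplex ℝ S := by
  refine ⟨fun s => sum_nonneg fun sa _ => mul_nonneg (hd.1 sa) ENNReal.toReal_nonneg, ?_⟩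
  simp only [transition]
  rw [sum_comm]
  simp only [← mul_sum, (p _).toReal_mem_stdSimplex.2, mul_one, hd.2]

theorem marginal_mem_stdSimplex (ρ0 : PMF S) (πseq : ℕ → S → PMF A)
    (pseq : ℕ → S × A → PMF S) (t : ℕ) : marginal ρ0 πseq pseq t ∈ stdSimplex ℝ (S × A) := by
  induction t with
  | zero => exact withPolicy_mem_stdSimplex ρ0.toReal_mem_stdSimplex _
  | succ t ih =>
    rw [marginal_succ]
    exact withPolicy_mem_stdSimplex (transition_mem_stdSimplex _ ih) _

theorem tvFun_withPolicy_left (q1 q2 : S → ℝ) (π : S → PMF A) :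
    tvFun (withPolicy q1 π) (withPolicy q2 π) = tvFun q1 q2 := by
  simp only [tvFun, withPolicy, Fintype.sum_prod_type, ← sub_mul, abs_mul,
    abs_of_nonneg ENNReal.toReal_nonneg, ← mul_sum, (π _).toReal_mem_stdSimplex.2, mul_one]

theorem tvFun_withPolicy_right {q : S → ℝ} (hq : q ∈ stdSimplex ℝ S) (π1 π2 : S → PMF A)
    {ε : ℝ} (hε : ∀ s, tv (π1 s) (π2 s) ≤ ε) :
    tvFun (withPolicy q π1) (withPolicy q π2) ≤ ε :=
  calc tvFun (withPolicy q π1) (withPolicy q π2) = ∑ s, q s * tv (π1 s) (π2 s) := by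
        simp only [tvFun, tv, withPolicy, Fintype.sum_prod_type, ← mul_sub, abs_mul,
          abs_of_nonneg (hq.1 _), ← mul_sum]
        rw [mul_sum]
        exact sum_congr rfl fun s _ => by ring
    _ ≤ ∑ s, q s * ε := sum_le_sum fun s _ => mul_le_mul_of_nonneg_left (hε s) (hq.1 s)
    _ = ε := by rw [← sum_mul, hq.2, one_mul]

theorem tvFun_withPolicy_le {q1 q2 : S → ℝ} (hq2 : q2 ∈ stdSimplex ℝ S) (π1 π2 : S → PMF A)
    {ε : ℝ} (hε : ∀ s, tv (π1 s) (π2 s) ≤ ε) :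
    tvFun (withPolicy q1 π1) (withPolicy q2 π2) ≤ tvFun q1 q2 + ε :=
  calc tvFun (withPolicy q1 π1) (withPolicy q2 π2)
      ≤ tvFun (withPolicy q1 π1) (withPolicy q2 π1) +
          tvFun (withPolicy q2 π1) (withPolicy q2 π2) := tvFun_triangle _ _ _
    _ ≤ tvFun q1 q2 + ε := by
        rw [tvFun_withPolicy_left]
        gcongr
        exact tvFun_withPolicy_right hq2 π1 π2 hε

theorem tvFun_transition_le (p : S × A → PMF S) (d1 d2 : S × A → ℝ) :
    tvFun (transition p d1) (transition p d2) ≤ tvFun d1 d2 := by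
  simp only [tvFun, transition, ← sum_sub_distrib, ← sub_mul]
  gcongr
  calc ∑ s, |∑ sa, (d1 sa - d2 sa) * (p sa s).toReal|
      ≤ ∑ s, ∑ sa, |d1 sa - d2 sa| * (p sa s).toReal := by
        gcongr with s
        refine (abs_sum_le_sum_abs _ _).trans (le_of_eq (sum_congr rfl fun sa _ => ?_))
        rw [abs_mul, abs_of_nonneg ENNReal.toReal_nonneg]
    _ = ∑ sa, |d1 sa - d2 sa| := by
        rw [sum_comm]
        simp only [← mul_sum, (p _).toReal_mem_stdSimplex.2, mul_one]

theorem tvFun_marginal_le (ρ0 : PMF S) (πseq1 πseq2 : ℕ → S → PMF A)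
    (pseq : ℕ → S × A → PMF S) {ε : ℝ} (hε : ∀ t s, tv (πseq1 t s) (πseq2 t s) ≤ ε) (t : ℕ) :
    tvFun (marginal ρ0 πseq1 pseq t) (marginal ρ0 πseq2 pseq t) ≤ (t + 1) * ε := by
  induction t with
  | zero =>
    simpa [marginal_zero] using tvFun_withPolicy_right ρ0.toReal_mem_stdSimplex _ _ (hε 0)
  | succ t ih =>
    rw [marginal_succ, marginal_succ]
    calc _ ≤ tvFun (transition (pseq t) (marginal ρ0 πseq1 pseq t))
              (transition (pseq t) (marginal ρ0 πseq2 pseq t)) + ε :=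
          tvFun_withPolicy_le (transition_mem_stdSimplex _ (marginal_mem_stdSimplex _ _ _ t))
            _ _ (hε (t + 1))
      _ ≤ (t + 1) * ε + ε := by gcongr; exact (tvFun_transition_le _ _ _).trans ih
      _ = ((t + 1 : ℕ) + 1) * ε := by push_cast; ring

theorem summable_discounted_reward {d : ℕ → S × A → ℝ} (hd : ∀ t, d t ∈ stdSimplex ℝ (S × A))
    {r : S × A → ℝ} {rmax : ℝ} (hr : ∀ sa, |r sa| ≤ rmax) {γ : ℝ} (hγ0 : 0 ≤ γ) (hγ1 : γ < 1) :
    Summable fun t => γ ^ t * ∑ sa, d t sa * r sa := by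
  refine ((summable_geometric_of_lt_one hγ0 hγ1).mul_left rmax).of_norm_bounded fun t => ?_
  rw [Real.norm_eq_abs, abs_mul, abs_pow, abs_of_nonneg hγ0, mul_comm rmax]
  exact mul_le_mul_of_nonneg_left (abs_sum_mul_le_of_mem_stdSimplex (hd t) hr) (pow_nonneg hγ0 t)

theorem abs_ret_sub_le {d1 d2 : ℕ → S × A → ℝ} (hd1 : ∀ t, d1 t ∈ stdSimplex ℝ (S × A))
    (hd2 : ∀ t, d2 t ∈ stdSimplex ℝ (S × A)) {r : S × A → ℝ} {rmax : ℝ} (hrmax : 0 ≤ rmax)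
    (hr : ∀ sa, |r sa| ≤ rmax) {γ : ℝ} (hγ0 : 0 ≤ γ) (hγ1 : γ < 1) {ε : ℝ}
    (htv : ∀ t : ℕ, tvFun (d1 t) (d2 t) ≤ (t + 1) * ε) :
    |ret γ r d1 - ret γ r d2| ≤ 2 * rmax * ε * (γ / (1 - γ) ^ 2 + (1 - γ)⁻¹) := by
  rw [ret, ret, ← (summable_discounted_reward hd1 hr hγ0 hγ1).tsum_sub
    (summable_discounted_reward hd2 hr hγ0 hγ1), ← Real.norm_eq_abs]
  refine tsum_of_norm_bounded ((hasSum_succ_mul_geometric hγ0 hγ1).mul_left (2 * rmax * ε))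
    fun t => ?_
  rw [Real.norm_eq_abs, ← mul_sub, abs_mul, abs_pow, abs_of_nonneg hγ0]
  calc γ ^ t * |∑ sa, d1 t sa * r sa - ∑ sa, d2 t sa * r sa|
      ≤ γ ^ t * (2 * rmax * ((t + 1) * ε)) := by
        gcongr
        exact (abs_sum_mul_sub_sum_mul_le hr _ _).trans (by gcongr; exact htv t)
    _ = 2 * rmax * ε * ((t + 1) * γ ^ t) := by ring

end

theorem returns_bound_same_dynamics_general
    {S A : Type*} [Fintype S] [Fintype A]
    (p : S × A → PMF S) (π1 π2 : S → PMF A) (ρ0 : PMF S)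
    (r : S × A → ℝ) (rmax : ℝ) (hrmax : 0 ≤ rmax) (hr : ∀ sa : S × A, |r sa| ≤ rmax)
    (γ : ℝ) (hγ0 : 0 < γ) (hγ1 : γ < 1) (επ : ℝ)
    (hεπ : ∀ s : S, tv (π1 s) (π2 s) ≤ επ) :
    |ret γ r (marginal ρ0 (fun _ => π1) (fun _ => p)) -
        ret γ r (marginal ρ0 (fun _ => π2) (fun _ => p))| ≤
      2 * rmax * γ * επ / (1 - γ) ^ 2 + 2 * rmax * επ / (1 - γ) := by
  have hret := abs_ret_sub_le (marginal_mem_stdSimplex _ _ _) (marginal_mem_stdSimplex _ _ _)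
    hrmax hr hγ0.le hγ1 (tvFun_marginal_le ρ0 _ _ (fun _ => p) fun _ => hεπ)
  convert hret using 1
  ring

/-- Returns bound for two policies under the same dynamics. -/
theorem returns_bound_same_dynamics
    {S A : Type*} [Fintype S] [Fintype A] [Nonempty S] [Nonempty A]
    (p : S × A → PMF S) (π1 π2 : S → PMF A) (ρ0 : PMF S)
    (r : S × A → ℝ) (rmax : ℝ) (hrmax : 0 ≤ rmax) (hr : ∀ sa : S × A, |r sa| ≤ rmax)
    (γ : ℝ) (hγ0 : 0 < γ) (hγ1 : γ < 1) (επ : ℝ)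
    (hεπ : ∀ s : S, tv (π1 s) (π2 s) ≤ επ) :
    |ret γ r (marginal ρ0 (fun _ => π1) (fun _ => p)) -
        ret γ r (marginal ρ0 (fun _ => π2) (fun _ => p))| ≤
      2 * rmax * γ * επ / (1 - γ) ^ 2 + 2 * rmax * επ / (1 - γ) :=
  returns_bound_same_dynamics_general p π1 π2 ρ0 r rmax hrmax hr γ hγ0 hγ1 επ hεπ
end

section
/- Let S and A be finite nonempty sets, k ∈ ℕ, γ ∈ (0,1), and consider two branched processes i ∈ {1,2} as in the k-branched setup (post-branch pair (π_i^post, p_i^post) for the first k steps, pre-branch pair (π_i^pre, p_i^pre) afterwards) from a common initial state distribution, with per-step divergences bounded by ε_m^post, ε_π^post during the post-branch phase and ε_m^pre, ε_π^pre during the pre-branch phase. Define the discounted occupancy measures d_i(s,a) = (1−γ)·Σ_{t=0}^∞ γ^t·d_i^t(s,a). Then TV(d_1, d_2) ≤ k·(ε_m^post + 2·ε_π^post) + γ^{k+1}/(1−γ)·(ε_m^pre + ε_π^pre) + γ^k·ε_π^pre. -/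
open scoped BigOperators

/-!
Per step, the state-action marginals of the two processes drift apart by at most the expected
model divergence plus the policy divergence: by the triangle inequality,
`TV(d₁ᵗ⁺¹, d₂ᵗ⁺¹) ≤ TV(d₁ᵗ, d₂ᵗ) + E_{d₁ᵗ}[TV(p₁, p₂)] + max_s TV(π₁(·|s), π₂(·|s))`.
By convexity of `TV`, `TV(d₁, d₂) ≤ (1 - γ) ∑ γᵗ TV(d₁ᵗ, d₂ᵗ)`, and weighting the recursion by
`γᵗ` gives `TV(d₁, d₂) ≤ ∑ γᵗ ε_π(t) + γ ∑ γᵗ ε_m(t)`. The first `k` terms cost at most `k` times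
the post-branch errors; the remaining ones form a geometric tail starting at `γᵏ`.
-/

open Finset

section TotalVariation

variable {X Y : Type*} [Fintype X]

lemma PMF.sum_toReal_eq_one (q : PMF X) : ∑ x, (q x).toReal = 1 := by
  have h := q.tsum_coe
  rw [tsum_fintype] at h
  rw [← ENNReal.toReal_sum fun x _ => q.apply_ne_top x, h, ENNReal.toReal_one]

lemma tv_nonneg (q1 q2 : PMF X) : 0 ≤ tv q1 q2 := by
  unfold tv; positivity

lemma tvFun_nonneg (d1 d2 : X → ℝ) : 0 ≤ tvFun d1 d2 := by
  unfold tvFun; positivity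

lemma tvFun_self (d : X → ℝ) : tvFun d d = 0 := by
  simp [tvFun]

lemma abs_tvFun_le_one {d1 d2 : X → ℝ} (h1 : ∀ x, 0 ≤ d1 x) (h2 : ∀ x, 0 ≤ d2 x)
    (hs1 : ∑ x, d1 x = 1) (hs2 : ∑ x, d2 x = 1) : |tvFun d1 d2| ≤ 1 := by
  rw [abs_of_nonneg (tvFun_nonneg d1 d2)]
  have : ∑ x, |d1 x - d2 x| ≤ ∑ x, (d1 x + d2 x) :=
    sum_le_sum fun x _ => abs_sub_le_iff.2 ⟨by linarith [h2 x], by linarith [h1 x]⟩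
  rw [sum_add_distrib, hs1, hs2] at this
  unfold tvFun
  linarith

lemma tvFun_const_mul {c : ℝ} (hc : 0 ≤ c) (d1 d2 : X → ℝ) :
    tvFun (fun x => c * d1 x) (fun x => c * d2 x) = c * tvFun d1 d2 := by
  unfold tvFun
  simp_rw [← mul_sub, abs_mul, abs_of_nonneg hc, ← mul_sum]
  ring

lemma tvFun_tsum_le {f g : ℕ → X → ℝ} (hf : ∀ x, Summable fun t => f t x)
    (hg : ∀ x, Summable fun t => g t x) :
    tvFun (fun x => ∑' t, f t x) (fun x => ∑' t, g t x) ≤ ∑' t, tvFun (f t) (g t) := by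
  have habs : ∀ x, Summable fun t => |f t x - g t x| :=
    fun x => ((hf x).sub (hg x)).abs
  have hx : ∀ x, |∑' t, f t x - ∑' t, g t x| ≤ ∑' t, |f t x - g t x| := fun x => by
    rw [← (hf x).tsum_sub (hg x)]
    simpa only [Real.norm_eq_abs] using norm_tsum_le_tsum_norm (f := fun t => f t x - g t x)
      (by simpa only [Real.norm_eq_abs] using habs x)
  unfold tvFun
  rw [tsum_mul_left, Summable.tsum_finsetSum fun x _ => habs x]
  gcongr with x
  exact hx x

lemma sum_mul_le_of_forall_le {w f : X → ℝ} {ε : ℝ} (hw : ∀ x, 0 ≤ w x) (hsum : ∑ x, w x = 1)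
    (hf : ∀ x, f x ≤ ε) : ∑ x, w x * f x ≤ ε :=
  calc ∑ x, w x * f x ≤ ∑ x, w x * ε :=
        sum_le_sum fun x _ => mul_le_mul_of_nonneg_left (hf x) (hw x)
    _ = ε := by rw [← sum_mul, hsum, one_mul]

noncomputable def mixture (w : X → ℝ) (q : X → PMF Y) : Y → ℝ :=
  fun y => ∑ x, w x * (q x y).toReal

lemma mixture_nonneg {w : X → ℝ} (hw : ∀ x, 0 ≤ w x) (q : X → PMF Y) (y : Y) :
    0 ≤ mixture w q y :=
  sum_nonneg fun x _ => mul_nonneg (hw x) ENNReal.toReal_nonneg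

lemma sum_mixture [Fintype Y] (w : X → ℝ) (q : X → PMF Y) :
    ∑ y, mixture w q y = ∑ x, w x := by
  unfold mixture
  rw [sum_comm]
  simp_rw [← mul_sum, PMF.sum_toReal_eq_one, mul_one]

lemma sum_prod_mul_toReal [Fintype Y] (w : X → ℝ) (q : X → PMF Y) :
    ∑ xy : X × Y, w xy.1 * (q xy.1 xy.2).toReal = ∑ x, w x := by
  simp_rw [Fintype.sum_prod_type, ← mul_sum, PMF.sum_toReal_eq_one, mul_one]

lemma tvFun_prod_le [Fintype Y] (w1 w2 : X → ℝ) (q1 q2 : X → PMF Y)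
    (hw1 : ∀ x, 0 ≤ w1 x) :
    tvFun (fun xy : X × Y => w1 xy.1 * (q1 xy.1 xy.2).toReal)
        (fun xy => w2 xy.1 * (q2 xy.1 xy.2).toReal) ≤
      ∑ x, w1 x * tv (q1 x) (q2 x) + tvFun w1 w2 := by
  have hrow : ∀ x, ∑ y, |w1 x * (q1 x y).toReal - w2 x * (q2 x y).toReal| ≤
      w1 x * (2 * tv (q1 x) (q2 x)) + |w1 x - w2 x| := by
    intro x
    calc ∑ y, |w1 x * (q1 x y).toReal - w2 x * (q2 x y).toReal|
        ≤ ∑ y, (w1 x * |(q1 x y).toReal - (q2 x y).toReal| +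
            |w1 x - w2 x| * (q2 x y).toReal) := by
          gcongr with y
          calc _ = |w1 x * ((q1 x y).toReal - (q2 x y).toReal) +
                (w1 x - w2 x) * (q2 x y).toReal| := by ring_nf
            _ ≤ _ := by
              refine (abs_add_le _ _).trans_eq ?_
              rw [abs_mul, abs_mul, abs_of_nonneg (hw1 x), abs_of_nonneg ENNReal.toReal_nonneg]
      _ = w1 x * (2 * tv (q1 x) (q2 x)) + |w1 x - w2 x| := by
          rw [sum_add_distrib, ← mul_sum, ← mul_sum, PMF.sum_toReal_eq_one, tv]
          ring
  unfold tvFun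
  rw [Fintype.sum_prod_type]
  calc 1 / 2 * ∑ x, ∑ y, |w1 x * (q1 x y).toReal - w2 x * (q2 x y).toReal|
      ≤ 1 / 2 * ∑ x, (w1 x * (2 * tv (q1 x) (q2 x)) + |w1 x - w2 x|) := by
        gcongr with x
        exact hrow x
    _ = ∑ x, w1 x * tv (q1 x) (q2 x) + 1 / 2 * ∑ x, |w1 x - w2 x| := by
        simp_rw [sum_add_distrib, mul_left_comm _ (2 : ℝ), ← mul_sum]
        ring

lemma tvFun_mixture_le [Fintype Y] (w1 w2 : X → ℝ) (q1 q2 : X → PMF Y)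
    (hw1 : ∀ x, 0 ≤ w1 x) :
    tvFun (mixture w1 q1) (mixture w2 q2) ≤ ∑ x, w1 x * tv (q1 x) (q2 x) + tvFun w1 w2 := by
  refine le_trans ?_ (tvFun_prod_le w1 w2 q1 q2 hw1)
  unfold tvFun mixture
  rw [Fintype.sum_prod_type, sum_comm]
  gcongr with y
  rw [← sum_sub_distrib]
  exact abs_sum_le_sum_abs _ _

end TotalVariation

section Discounted

variable {γ : ℝ}

lemma summable_pow_mul_of_abs_le (hγ0 : 0 ≤ γ) (hγ1 : γ < 1) {f : ℕ → ℝ} {C : ℝ}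
    (hf : ∀ t, |f t| ≤ C) : Summable fun t => γ ^ t * f t :=
  Summable.of_norm_bounded ((summable_geometric_of_lt_one hγ0 hγ1).mul_right C) fun t => by
    rw [Real.norm_eq_abs, abs_mul, abs_pow, abs_of_nonneg hγ0]
    exact mul_le_mul_of_nonneg_left (hf t) (by positivity)

/- Splitting off the `t = 0` term of `∑ γᵗ Δₜ` and applying the recursion to the rest gives
`∑ γᵗ Δₜ ≤ γ ∑ γᵗ Δₜ + ∑ γᵗ aₜ + γ ∑ γᵗ bₜ`. -/
lemma one_sub_mul_tsum_le_of_le_add (hγ : 0 ≤ γ) {Δ a b : ℕ → ℝ}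
    (hΔ : Summable fun t => γ ^ t * Δ t) (ha : Summable fun t => γ ^ t * a t)
    (hb : Summable fun t => γ ^ t * b t) (h0 : Δ 0 ≤ a 0)
    (hstep : ∀ t, Δ (t + 1) ≤ Δ t + b t + a (t + 1)) :
    (1 - γ) * ∑' t, γ ^ t * Δ t ≤ ∑' t, γ ^ t * a t + γ * ∑' t, γ ^ t * b t := by
  have ha' : Summable fun t => γ ^ (t + 1) * a (t + 1) := (summable_nat_add_iff 1).mpr ha
  have hshift : ∑' t, γ ^ (t + 1) * Δ (t + 1) ≤
      γ * ∑' t, γ ^ t * Δ t + γ * ∑' t, γ ^ t * b t + ∑' t, γ ^ (t + 1) * a (t + 1) := by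
    rw [← tsum_mul_left, ← tsum_mul_left, ← (hΔ.mul_left γ).tsum_add (hb.mul_left γ),
      ← ((hΔ.mul_left γ).add (hb.mul_left γ)).tsum_add ha']
    refine Summable.tsum_le_tsum (fun t => ?_) ((summable_nat_add_iff 1).mpr hΔ)
      (((hΔ.mul_left γ).add (hb.mul_left γ)).add ha')
    calc γ ^ (t + 1) * Δ (t + 1) ≤ γ ^ (t + 1) * (Δ t + b t + a (t + 1)) :=
          mul_le_mul_of_nonneg_left (hstep t) (by positivity)
      _ = _ := by ring
  have hΔ0 := hΔ.tsum_eq_zero_add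
  have ha0 := ha.tsum_eq_zero_add
  simp only [pow_zero, one_mul] at hΔ0 ha0
  linarith

lemma summable_pow_mul_ite (hγ0 : 0 ≤ γ) (hγ1 : γ < 1) (k : ℕ) (x y : ℝ) :
    Summable fun t => γ ^ t * (if t < k then x else y) :=
  summable_pow_mul_of_abs_le hγ0 hγ1 (C := |x| + |y|) fun t => by
    split_ifs <;> linarith [abs_nonneg x, abs_nonneg y]

lemma tsum_pow_mul_ite_le (hγ0 : 0 ≤ γ) (hγ1 : γ < 1) (k : ℕ) {x : ℝ} (hx : 0 < k → 0 ≤ x)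
    (y : ℝ) : ∑' t, γ ^ t * (if t < k then x else y) ≤ k * x + γ ^ k / (1 - γ) * y := by
  have hhead : ∑ t ∈ range k, γ ^ t * (if t < k then x else y) ≤ k * x := by
    rcases k.eq_zero_or_pos with rfl | hk
    · simp
    calc ∑ t ∈ range k, γ ^ t * (if t < k then x else y)
        ≤ ∑ t ∈ range k, x := sum_le_sum fun t ht => by
          rw [if_pos (mem_range.1 ht)]
          exact mul_le_of_le_one_left (hx hk) (pow_le_one₀ hγ0 hγ1.le)
      _ = k * x := by rw [sum_const, card_range, nsmul_eq_mul]
  have htail : ∑' t, γ ^ (t + k) * (if t + k < k then x else y) = γ ^ k / (1 - γ) * y := by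
    simp only [show ∀ t, ¬t + k < k from fun t => by omega, if_false, pow_add]
    rw [tsum_mul_right, tsum_mul_right, tsum_geometric_of_lt_one hγ0 hγ1]
    ring
  rw [← (summable_pow_mul_ite hγ0 hγ1 k x y).sum_add_tsum_nat_add k, htail]
  linarith

lemma tsum_pow_mul_ite_add_mul_tsum_le (hγ0 : 0 ≤ γ) (hγ1 : γ < 1) (k : ℕ) {xπ xm : ℝ}
    (hxπ : 0 ≤ xπ) (hxm : 0 < k → 0 ≤ xm) (yπ ym : ℝ) :
    ∑' t, γ ^ t * (if t < k then xπ else yπ) + γ * ∑' t, γ ^ t * (if t < k then xm else ym) ≤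
      k * (xm + 2 * xπ) + γ ^ (k + 1) / (1 - γ) * (ym + yπ) + γ ^ k * yπ := by
  have hkxm : 0 ≤ (k : ℝ) * xm := by
    rcases k.eq_zero_or_pos with rfl | hk
    · simp
    · exact mul_nonneg k.cast_nonneg (hxm hk)
  have h1γ : 1 - γ ≠ 0 := by linarith
  have hsplit : γ ^ k / (1 - γ) = γ ^ k + γ ^ (k + 1) / (1 - γ) := by
    field_simp
    ring
  have hshift : γ * (γ ^ k / (1 - γ)) = γ ^ (k + 1) / (1 - γ) := by
    rw [pow_succ]
    ring
  calc _ ≤ (k * xπ + γ ^ k / (1 - γ) * yπ) + γ * (k * xm + γ ^ k / (1 - γ) * ym) := by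
        gcongr
        · exact tsum_pow_mul_ite_le hγ0 hγ1 k (fun _ => hxπ) yπ
        · exact tsum_pow_mul_ite_le hγ0 hγ1 k hxm ym
    _ ≤ _ := by
        rw [mul_add, ← mul_assoc γ (γ ^ k / (1 - γ)), hshift, hsplit]
        nlinarith [mul_nonneg (sub_nonneg.2 hγ1.le) hkxm, mul_nonneg k.cast_nonneg hxπ]

end Discounted

section Marginal

variable {S A : Type*} [Fintype S] [Fintype A]
  (ρ0 : PMF S) (π π1 π2 : ℕ → S → PMF A) (p p1 p2 : ℕ → S × A → PMF S)

lemma marginal_succ_s11 (t : ℕ) :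
    marginal ρ0 π p (t + 1) =
      fun sa => mixture (marginal ρ0 π p t) (p t) sa.1 * (π (t + 1) sa.1 sa.2).toReal := by
  ext sa
  rw [marginal, mixture, Fintype.sum_prod_type, sum_mul]
  simp_rw [sum_mul]

lemma marginal_nonneg (t : ℕ) (sa : S × A) : 0 ≤ marginal ρ0 π p t sa := by
  induction t generalizing sa with
  | zero => exact mul_nonneg ENNReal.toReal_nonneg ENNReal.toReal_nonneg
  | succ t ih =>
    rw [marginal_succ_s11]
    exact mul_nonneg (mixture_nonneg ih _ _) ENNReal.toReal_nonneg

lemma sum_marginal (t : ℕ) : ∑ sa, marginal ρ0 π p t sa = 1 := by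
  induction t with
  | zero => exact (sum_prod_mul_toReal _ _).trans ρ0.sum_toReal_eq_one
  | succ t ih => rw [marginal_succ_s11, sum_prod_mul_toReal, sum_mixture, ih]

lemma abs_marginal_le_one (t : ℕ) (sa : S × A) : |marginal ρ0 π p t sa| ≤ 1 := by
  rw [abs_of_nonneg (marginal_nonneg ρ0 π p t sa), ← sum_marginal ρ0 π p t]
  exact single_le_sum (fun sa _ => marginal_nonneg ρ0 π p t sa) (mem_univ sa)

lemma tvFun_marginal_zero_le {επ : ℝ} (hπ : ∀ s, tv (π1 0 s) (π2 0 s) ≤ επ) :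
    tvFun (marginal ρ0 π1 p1 0) (marginal ρ0 π2 p2 0) ≤ επ := by
  have h := tvFun_prod_le (fun s => (ρ0 s).toReal) (fun s => (ρ0 s).toReal) (π1 0) (π2 0)
    fun _ => ENNReal.toReal_nonneg
  rw [tvFun_self, add_zero] at h
  exact h.trans
    (sum_mul_le_of_forall_le (fun _ => ENNReal.toReal_nonneg) ρ0.sum_toReal_eq_one hπ)

lemma tvFun_marginal_succ_le (t : ℕ) {επ : ℝ}
    (hπ : ∀ s, tv (π1 (t + 1) s) (π2 (t + 1) s) ≤ επ) :
    tvFun (marginal ρ0 π1 p1 (t + 1)) (marginal ρ0 π2 p2 (t + 1)) ≤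
      tvFun (marginal ρ0 π1 p1 t) (marginal ρ0 π2 p2 t) +
        ∑ sa, marginal ρ0 π1 p1 t sa * tv (p1 t sa) (p2 t sa) + επ := by
  have hd1 := marginal_nonneg ρ0 π1 p1 t
  rw [marginal_succ_s11, marginal_succ_s11]
  calc _ ≤ ∑ s, mixture (marginal ρ0 π1 p1 t) (p1 t) s * tv (π1 (t + 1) s) (π2 (t + 1) s) +
          tvFun (mixture (marginal ρ0 π1 p1 t) (p1 t)) (mixture (marginal ρ0 π2 p2 t) (p2 t)) :=
        tvFun_prod_le _ _ _ _ (mixture_nonneg hd1 _)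
    _ ≤ επ + (∑ sa, marginal ρ0 π1 p1 t sa * tv (p1 t sa) (p2 t sa) +
          tvFun (marginal ρ0 π1 p1 t) (marginal ρ0 π2 p2 t)) := by
        gcongr
        · exact sum_mul_le_of_forall_le (mixture_nonneg hd1 _)
            (by rw [sum_mixture, sum_marginal]) hπ
        · exact tvFun_mixture_le _ _ _ _ hd1
    _ = _ := by ring

lemma summable_pow_mul_marginal {γ : ℝ} (hγ0 : 0 ≤ γ) (hγ1 : γ < 1) (sa : S × A) :
    Summable fun t => γ ^ t * marginal ρ0 π p t sa :=
  summable_pow_mul_of_abs_le hγ0 hγ1 fun t => abs_marginal_le_one ρ0 π p t sa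

lemma summable_pow_mul_tvFun_marginal {γ : ℝ} (hγ0 : 0 ≤ γ) (hγ1 : γ < 1) :
    Summable fun t => γ ^ t * tvFun (marginal ρ0 π1 p1 t) (marginal ρ0 π2 p2 t) :=
  summable_pow_mul_of_abs_le hγ0 hγ1 fun t => abs_tvFun_le_one
    (marginal_nonneg ρ0 π1 p1 t) (marginal_nonneg ρ0 π2 p2 t) (sum_marginal ρ0 π1 p1 t)
    (sum_marginal ρ0 π2 p2 t)

end Marginal

section Occupancy

variable {S A : Type*} [Fintype S] [Fintype A]
  (ρ0 : PMF S) (π1 π2 : ℕ → S → PMF A) (p1 p2 : ℕ → S × A → PMF S) {γ : ℝ}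

noncomputable def occupancy {X : Type*} (γ : ℝ) (d : ℕ → X → ℝ) : X → ℝ :=
  fun x => (1 - γ) * ∑' t, γ ^ t * d t x

lemma tvFun_occupancy_le_tsum (hγ0 : 0 ≤ γ) (hγ1 : γ < 1) :
    tvFun (occupancy γ (marginal ρ0 π1 p1)) (occupancy γ (marginal ρ0 π2 p2)) ≤
      (1 - γ) * ∑' t, γ ^ t * tvFun (marginal ρ0 π1 p1 t) (marginal ρ0 π2 p2 t) :=
  calc _ = (1 - γ) * tvFun (fun sa => ∑' t, γ ^ t * marginal ρ0 π1 p1 t sa)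
        (fun sa => ∑' t, γ ^ t * marginal ρ0 π2 p2 t sa) :=
        tvFun_const_mul (by linarith) _ _
    _ ≤ (1 - γ) * ∑' t, tvFun (fun sa => γ ^ t * marginal ρ0 π1 p1 t sa)
        (fun sa => γ ^ t * marginal ρ0 π2 p2 t sa) := by
        gcongr
        exact tvFun_tsum_le (summable_pow_mul_marginal ρ0 π1 p1 hγ0 hγ1)
          (summable_pow_mul_marginal ρ0 π2 p2 hγ0 hγ1)
    _ = _ := by simp_rw [tvFun_const_mul (pow_nonneg hγ0 _)]

lemma tvFun_occupancy_le (hγ0 : 0 ≤ γ) (hγ1 : γ < 1) {a b : ℕ → ℝ}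
    (ha : Summable fun t => γ ^ t * a t) (hb : Summable fun t => γ ^ t * b t)
    (hπ : ∀ t s, tv (π1 t s) (π2 t s) ≤ a t)
    (hp : ∀ t, ∑ sa, marginal ρ0 π1 p1 t sa * tv (p1 t sa) (p2 t sa) ≤ b t) :
    tvFun (occupancy γ (marginal ρ0 π1 p1)) (occupancy γ (marginal ρ0 π2 p2)) ≤
      ∑' t, γ ^ t * a t + γ * ∑' t, γ ^ t * b t :=
  (tvFun_occupancy_le_tsum ρ0 π1 π2 p1 p2 hγ0 hγ1).trans <|
    one_sub_mul_tsum_le_of_le_add hγ0 (summable_pow_mul_tvFun_marginal ρ0 π1 π2 p1 p2 hγ0 hγ1)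
      ha hb (tvFun_marginal_zero_le ρ0 π1 π2 p1 p2 (hπ 0)) fun t =>
        (tvFun_marginal_succ_le ρ0 π1 π2 p1 p2 t (hπ (t + 1))).trans (by linarith [hp t])

end Occupancy

theorem branched_occupancy_tvd_bound_general
    {S A : Type*} [Fintype S] [Fintype A]
    (k : ℕ)
    (p1pre p2pre p1post p2post : S × A → PMF S)
    (π1pre π2pre π1post π2post : S → PMF A) (ρ0 : PMF S)
    (γ : ℝ) (hγ0 : 0 < γ) (hγ1 : γ < 1) (εmpre επpre εmpost επpost : ℝ)
    (hmpost : ∀ t : ℕ, t < k → ∑ sa : S × A,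
      marginal ρ0 (fun t => if t < k then π1post else π1pre)
        (fun t => if t < k then p1post else p1pre) t sa *
          tv (p1post sa) (p2post sa) ≤ εmpost)
    (hπpost : ∀ s : S, tv (π1post s) (π2post s) ≤ επpost)
    (hmpre : ∀ t : ℕ, k ≤ t → ∑ sa : S × A,
      marginal ρ0 (fun t => if t < k then π1post else π1pre)
        (fun t => if t < k then p1post else p1pre) t sa *
          tv (p1pre sa) (p2pre sa) ≤ εmpre)
    (hπpre : ∀ s : S, tv (π1pre s) (π2pre s) ≤ επpre) :
    tvFun
        (fun sa : S × A => (1 - γ) * ∑' t : ℕ, γ ^ t *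
          marginal ρ0 (fun t => if t < k then π1post else π1pre)
            (fun t => if t < k then p1post else p1pre) t sa)
        (fun sa : S × A => (1 - γ) * ∑' t : ℕ, γ ^ t *
          marginal ρ0 (fun t => if t < k then π2post else π2pre)
            (fun t => if t < k then p2post else p2pre) t sa) ≤
      (k : ℝ) * (εmpost + 2 * επpost) +
        γ ^ (k + 1) / (1 - γ) * (εmpre + επpre) + γ ^ k * επpre := by
  set π1 : ℕ → S → PMF A := fun t => if t < k then π1post else π1pre
  set π2 : ℕ → S → PMF A := fun t => if t < k then π2post else π2pre
  set p1 : ℕ → S × A → PMF S := fun t => if t < k then p1post else p1pre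
  set p2 : ℕ → S × A → PMF S := fun t => if t < k then p2post else p2pre
  have hεπpost : 0 ≤ επpost := (tv_nonneg _ _).trans (hπpost ρ0.support_nonempty.some)
  have hεmpost (hk : 0 < k) : 0 ≤ εmpost :=
    (sum_nonneg fun sa _ => mul_nonneg (marginal_nonneg _ _ _ 0 sa) (tv_nonneg _ _)).trans
      (hmpost 0 hk)
  refine (tvFun_occupancy_le ρ0 π1 π2 p1 p2 hγ0.le hγ1
    (summable_pow_mul_ite hγ0.le hγ1 k επpost επpre)
    (summable_pow_mul_ite hγ0.le hγ1 k εmpost εmpre) (fun t s => ?_) (fun t => ?_)).trans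
    (tsum_pow_mul_ite_add_mul_tsum_le hγ0.le hγ1 k hεπpost hεmpost επpre εmpre)
  · simp only [π1, π2]
    split_ifs
    exacts [hπpost s, hπpre s]
  · simp only [p1, p2]
    split_ifs with h
    exacts [hmpost t h, hmpre t (not_lt.1 h)]

/-- Discounted occupancy measure bound for branched rollouts. -/
theorem branched_occupancy_tvd_bound
    {S A : Type*} [Fintype S] [Fintype A] [Nonempty S] [Nonempty A]
    (k : ℕ)
    (p1pre p2pre p1post p2post : S × A → PMF S)
    (π1pre π2pre π1post π2post : S → PMF A) (ρ0 : PMF S)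
    (γ : ℝ) (hγ0 : 0 < γ) (hγ1 : γ < 1) (εmpre επpre εmpost επpost : ℝ)
    (hmpost : ∀ t : ℕ, t < k → ∑ sa : S × A,
      marginal ρ0 (fun t => if t < k then π1post else π1pre)
        (fun t => if t < k then p1post else p1pre) t sa *
          tv (p1post sa) (p2post sa) ≤ εmpost)
    (hπpost : ∀ s : S, tv (π1post s) (π2post s) ≤ επpost)
    (hmpre : ∀ t : ℕ, k ≤ t → ∑ sa : S × A,
      marginal ρ0 (fun t => if t < k then π1post else π1pre)
        (fun t => if t < k then p1post else p1pre) t sa *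
          tv (p1pre sa) (p2pre sa) ≤ εmpre)
    (hπpre : ∀ s : S, tv (π1pre s) (π2pre s) ≤ επpre) :
    tvFun
        (fun sa : S × A => (1 - γ) * ∑' t : ℕ, γ ^ t *
          marginal ρ0 (fun t => if t < k then π1post else π1pre)
            (fun t => if t < k then p1post else p1pre) t sa)
        (fun sa : S × A => (1 - γ) * ∑' t : ℕ, γ ^ t *
          marginal ρ0 (fun t => if t < k then π2post else π2pre)
            (fun t => if t < k then p2post else p2pre) t sa) ≤
      (k : ℝ) * (εmpost + 2 * επpost) +
        γ ^ (k + 1) / (1 - γ) * (εmpre + επpre) + γ ^ k * επpre :=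
  branched_occupancy_tvd_bound_general k p1pre p2pre p1post p2post π1pre π2pre π1post π2post ρ0 γ
    hγ0 hγ1 εmpre επpre εmpost επpost hmpost hπpost hmpre hπpre
end
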